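/- Double truncations of minimizers are minimizers: Let Ω ⊆ ℝⁿ (n ≥ 1) be a bounded open set, let a : ℝⁿ → ℝ be nonnegative and integrable on Ω, and let u : ℝⁿ → ℝ be a Lipschitz function such that ∫_Ω a‖∇u‖ dx ≤ ∫_Ω a‖∇v‖ dx for every Lipschitz v : ℝⁿ → ℝ with v = u on the frontier ∂Ω. For λ ∈ ℝ and ε > 0, define u_{λ,ε} := (1/ε) · min(ε, max(u − λ, 0)). Then u_{λ,ε} is Lipschitz and ∫_Ω a‖∇u_{λ,ε}‖ dx ≤ ∫_Ω a‖∇v‖ dx for every Lipschitz v : ℝⁿ → ℝ with v = u_{λ,ε} on ∂Ω. -/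

import Mathlib

/-!
Let `w = g ∘ u` with `g` monotone and `C`-Lipschitz (the double truncation has `C = 1/ε`), and
let `v` be a competitor with the boundary values of `w`. For `t = 1/(C+1)` the function
`φ = u + t (v - w)` has the boundary values of `u`. Wherever `u` and `w` are differentiable,
`∇w = c ∇u` with `0 ≤ c ≤ C`, so `∇φ = (1 - t c) ∇u + t ∇v` and
`‖∇φ‖ + t ‖∇w‖ ≤ ‖∇u‖ + t ‖∇v‖`. By Rademacher's theorem this holds almost everywhere;
integrating against `a ≥ 0` and using `E(u) ≤ E(φ)` gives `E(w) ≤ E(v)`.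
-/

open MeasureTheory Filter
open scoped NNReal Topology

lemma ContinuousLinearMap.exists_eq_smul_of_sq_le {V : Type*} [TopologicalSpace V]
    [AddCommGroup V] [Module ℝ V] {M L : V →L[ℝ] ℝ} {C : ℝ} (hC : 0 ≤ C)
    (h : ∀ v, M v ^ 2 ≤ C * (M v * L v)) :
    ∃ c, 0 ≤ c ∧ c ≤ C ∧ M = c • L := by
  have hker : ∀ v, L v = 0 → M v = 0 := fun v hv => by
    have := h v
    rw [hv, mul_zero, mul_zero] at this
    exact pow_eq_zero_iff two_ne_zero |>.mp (le_antisymm this (sq_nonneg _))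
  by_cases hL : L = 0
  · exact ⟨0, le_rfl, hC, by ext v; simp [hker v (by simp [hL])]⟩
  obtain ⟨v₀, hv₀⟩ : ∃ v₀, L v₀ ≠ 0 := by
    by_contra! h0
    exact hL (ContinuousLinearMap.ext h0)
  set c := M v₀ / L v₀
  have hM : M = c • L := by
    ext v
    have := hker (v - (L v / L v₀) • v₀) (by simp [hv₀])
    simp only [map_sub, map_smul, smul_eq_mul, sub_eq_zero] at this
    simp only [_root_.smul_apply, smul_eq_mul, this, c]
    field_simp
  have hc : c ^ 2 ≤ C * c := by
    have := h v₀
    rw [hM] at this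
    simp only [_root_.smul_apply, smul_eq_mul] at this
    have hpos : 0 < L v₀ ^ 2 := by positivity
    nlinarith
  exact ⟨c, by nlinarith, by nlinarith, hM⟩

lemma fderiv_apply_sq_le_of_sq_sub_le {V : Type*} [NormedAddCommGroup V] [NormedSpace ℝ V]
    {u w : V → ℝ} {x : V} {C : ℝ}
    (hu : DifferentiableAt ℝ u x) (hw : DifferentiableAt ℝ w x)
    (h : ∀ y, (w y - w x) ^ 2 ≤ C * ((w y - w x) * (u y - u x))) (v : V) :
    fderiv ℝ w x v ^ 2 ≤ C * (fderiv ℝ w x v * fderiv ℝ u x v) := by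
  have slope {f : V → ℝ} (hf : DifferentiableAt ℝ f x) :
      Tendsto (fun t : ℝ => t⁻¹ * (f (x + t • v) - f x)) (𝓝[≠] 0) (𝓝 (fderiv ℝ f x v)) := by
    simpa using (hf.hasFDerivAt.hasLineDerivAt v).tendsto_slope_zero
  refine le_of_tendsto_of_tendsto ((slope hw).pow 2) (((slope hw).mul (slope hu)).const_mul C) ?_
  filter_upwards with t
  have := mul_le_mul_of_nonneg_left (h (x + t • v)) (sq_nonneg t⁻¹)
  linear_combination this

/- One quadratic inequality encodes both monotonicity and the Lipschitz bound, and it survives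
passing to limits of difference quotients. -/
lemma Monotone.sq_sub_le_mul {g : ℝ → ℝ} {C : ℝ≥0} (hg : Monotone g) (hgC : LipschitzWith C g)
    (s t : ℝ) : (g s - g t) ^ 2 ≤ C * ((g s - g t) * (s - t)) := by
  have hmono : 0 ≤ (g s - g t) * (s - t) := by
    rcases le_total s t with hst | hst
    · exact mul_nonneg_of_nonpos_of_nonpos (sub_nonpos.2 (hg hst)) (sub_nonpos.2 hst)
    · exact mul_nonneg (sub_nonneg.2 (hg hst)) (sub_nonneg.2 hst)
  have hlip : |g s - g t| ≤ C * |s - t| := by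
    simpa only [Real.dist_eq] using hgC.dist_le_mul s t
  calc (g s - g t) ^ 2 = |g s - g t| * |g s - g t| := by rw [abs_mul_abs_self, sq]
    _ ≤ |g s - g t| * (C * |s - t|) := by gcongr
    _ = C * ((g s - g t) * (s - t)) := by rw [mul_left_comm, ← abs_mul, abs_of_nonneg hmono]

lemma norm_add_smul_sub_smul_add_le {F : Type*} [SeminormedAddCommGroup F] [NormedSpace ℝ F]
    (p q : F) {c t : ℝ} (hc : 0 ≤ c) (ht : 0 ≤ t) (htc : t * c ≤ 1) :
    ‖p + t • (q - c • p)‖ + t * ‖c • p‖ ≤ ‖p‖ + t * ‖q‖ := by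
  have hsplit : p + t • (q - c • p) = (1 - t * c) • p + t • q := by module
  have h1tc : 0 ≤ 1 - t * c := by linarith
  calc ‖p + t • (q - c • p)‖ + t * ‖c • p‖
      ≤ ‖(1 - t * c) • p‖ + ‖t • q‖ + t * ‖c • p‖ := by
        rw [hsplit]
        gcongr
        exact norm_add_le _ _
    _ = ‖p‖ + t * ‖q‖ := by
        rw [norm_smul, norm_smul, norm_smul, Real.norm_of_nonneg h1tc, Real.norm_of_nonneg ht,
          Real.norm_of_nonneg hc]
        ring

section Rademacher

variable {E : Type*} [NormedAddCommGroup E] [NormedSpace ℝ E] [FiniteDimensional ℝ E]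
  [MeasurableSpace E] [BorelSpace E] {μ : Measure E} [μ.IsAddHaarMeasure]

lemma ae_norm_fderiv_add_mul_le {u v : E → ℝ} {g : ℝ → ℝ} {Ku Kv C : ℝ≥0}
    (hu : LipschitzWith Ku u) (hv : LipschitzWith Kv v) (hg : Monotone g)
    (hgC : LipschitzWith C g) {t : ℝ} (ht : 0 ≤ t) (htC : t * C ≤ 1) :
    ∀ᵐ x ∂μ, ‖fderiv ℝ (fun y => u y + t * (v y - g (u y))) x‖ + t * ‖fderiv ℝ (g ∘ u) x‖ ≤
      ‖fderiv ℝ u x‖ + t * ‖fderiv ℝ v x‖ := by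
  filter_upwards [hu.ae_differentiableAt (μ := μ), hv.ae_differentiableAt (μ := μ),
    (hgC.comp hu).ae_differentiableAt (μ := μ)] with x hxu hxv hxw
  obtain ⟨c, hc0, hcC, hc⟩ := ContinuousLinearMap.exists_eq_smul_of_sq_le C.2
    (fderiv_apply_sq_le_of_sq_sub_le hxu hxw (fun y => hg.sq_sub_le_mul hgC (u y) (u x)))
  have hφ : fderiv ℝ (fun y => u y + t * (v y - g (u y))) x =
      fderiv ℝ u x + t • (fderiv ℝ v x - fderiv ℝ (g ∘ u) x) :=
    (hxu.hasFDerivAt.add ((hxv.hasFDerivAt.sub hxw.hasFDerivAt).const_mul t)).fderiv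
  rw [hφ, hc]
  exact norm_add_smul_sub_smul_add_le _ _ hc0 ht
    ((mul_le_mul_of_nonneg_left hcC ht).trans htC)

end Rademacher

section LeastGradient

variable {E : Type*} [NormedAddCommGroup E] [InnerProductSpace ℝ E] [CompleteSpace E]

lemma norm_gradient_eq_norm_fderiv (f : E → ℝ) (x : E) : ‖gradient f x‖ = ‖fderiv ℝ f x‖ :=
  (InnerProductSpace.toDual ℝ E).symm.norm_map _

variable [MeasurableSpace E]

noncomputable def gradientEnergy (μ : Measure E) (Ω : Set E) (a f : E → ℝ) : ℝ :=
  ∫ x in Ω, a x * ‖gradient f x‖ ∂μ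

def IsLeastGradientMinimizer (μ : Measure E) (Ω : Set E) (a u : E → ℝ) : Prop :=
  ∀ v : E → ℝ, (∃ K, LipschitzWith K v) → (∀ x ∈ frontier Ω, v x = u x) →
    gradientEnergy μ Ω a u ≤ gradientEnergy μ Ω a v

variable [BorelSpace E] {μ : Measure E} {Ω : Set E} {a : E → ℝ}

lemma LipschitzWith.integrableOn_mul_norm_gradient {f : E → ℝ} {K : ℝ≥0}
    (hf : LipschitzWith K f) (ha : IntegrableOn a Ω μ) :
    IntegrableOn (fun x => a x * ‖gradient f x‖) Ω μ := by
  simp only [norm_gradient_eq_norm_fderiv]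
  refine Integrable.mono' (ha.norm.const_mul K)
    (ha.aestronglyMeasurable.mul (measurable_fderiv ℝ f).norm.aestronglyMeasurable) ?_
  filter_upwards with x
  rw [norm_mul, norm_norm, mul_comm]
  exact mul_le_mul_of_nonneg_right (norm_fderiv_le_of_lipschitz ℝ hf) (norm_nonneg _)

variable [FiniteDimensional ℝ E] [μ.IsAddHaarMeasure]

theorem IsLeastGradientMinimizer.comp_monotone {u : E → ℝ} {g : ℝ → ℝ} {K C : ℝ≥0}
    (hmin : IsLeastGradientMinimizer μ Ω a u) (ha0 : ∀ x, 0 ≤ a x) (ha : IntegrableOn a Ω μ)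
    (hu : LipschitzWith K u) (hg : Monotone g) (hgC : LipschitzWith C g) :
    IsLeastGradientMinimizer μ Ω a (g ∘ u) := by
  rintro v ⟨Kv, hv⟩ hvΩ
  set t : ℝ := ((C : ℝ) + 1)⁻¹
  have ht : 0 < t := by positivity
  have htC : t * C ≤ 1 := by
    rw [inv_mul_le_iff₀ (by positivity)]
    linarith
  set φ : E → ℝ := fun y => u y + t * (v y - g (u y))
  have hφ : LipschitzWith _ φ := hu.add ((lipschitzWith_smul t).comp (hv.sub (hgC.comp hu)))
  have hφΩ : ∀ x ∈ frontier Ω, φ x = u x := fun x hx => by simp [φ, hvΩ x hx]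
  have hae : ∀ᵐ x ∂μ.restrict Ω, a x * ‖gradient φ x‖ + t * (a x * ‖gradient (g ∘ u) x‖) ≤
      a x * ‖gradient u x‖ + t * (a x * ‖gradient v x‖) := by
    refine ae_restrict_of_ae ?_
    filter_upwards [ae_norm_fderiv_add_mul_le (μ := μ) hu hv hg hgC ht.le htC] with x hx
    simp only [norm_gradient_eq_norm_fderiv]
    nlinarith [mul_le_mul_of_nonneg_left hx (ha0 x)]
  have hint {f : E → ℝ} {Kf : ℝ≥0} (hf : LipschitzWith Kf f) :=
    hf.integrableOn_mul_norm_gradient (μ := μ) ha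
  have henergy : gradientEnergy μ Ω a φ + t * gradientEnergy μ Ω a (g ∘ u) ≤
      gradientEnergy μ Ω a u + t * gradientEnergy μ Ω a v := by
    simp only [gradientEnergy, ← integral_const_mul]
    rw [← integral_add (hint hφ) ((hint (hgC.comp hu)).const_mul t),
      ← integral_add (hint hu) ((hint hv).const_mul t)]
    exact integral_mono_ae ((hint hφ).add ((hint (hgC.comp hu)).const_mul t))
      ((hint hu).add ((hint hv).const_mul t)) hae
  have := hmin φ ⟨_, hφ⟩ hφΩ
  exact le_of_mul_le_mul_left (by linarith) ht

end LeastGradient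

noncomputable def doubleTruncation (lam ε s : ℝ) : ℝ :=
  (1 / ε) * min ε (max (s - lam) 0)

lemma monotone_doubleTruncation (lam : ℝ) {ε : ℝ} (hε : 0 ≤ ε) :
    Monotone (doubleTruncation lam ε) := fun s t hst => by
  unfold doubleTruncation
  gcongr

lemma lipschitzWith_doubleTruncation (lam ε : ℝ) :
    LipschitzWith ‖1 / ε‖₊ (doubleTruncation lam ε) := by
  have hinner := ((LipschitzWith.id.sub (LipschitzWith.const lam)).max_const 0).const_min ε
  exact ((lipschitzWith_smul (β := ℝ) (1 / ε)).comp hinner).weaken (by simp)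

theorem double_truncations_of_minimizers_are_minimizers_general
    (n : ℕ)
    (Ω : Set (EuclideanSpace ℝ (Fin n)))
    (a : EuclideanSpace ℝ (Fin n) → ℝ) (ha0 : ∀ x, 0 ≤ a x)
    (hai : IntegrableOn a Ω)
    (u : EuclideanSpace ℝ (Fin n) → ℝ) (K : ℝ≥0) (hu : LipschitzWith K u)
    (hmin : ∀ v : EuclideanSpace ℝ (Fin n) → ℝ, (∃ K', LipschitzWith K' v) →
      (∀ x ∈ frontier Ω, v x = u x) →
      (∫ x in Ω, a x * ‖gradient u x‖) ≤ ∫ x in Ω, a x * ‖gradient v x‖)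
    (lam ε : ℝ) (hε : 0 < ε) :
    (∃ K', LipschitzWith K' (fun y => (1 / ε) * min ε (max (u y - lam) 0))) ∧
    (∀ v : EuclideanSpace ℝ (Fin n) → ℝ, (∃ K', LipschitzWith K' v) →
      (∀ x ∈ frontier Ω, v x = (1 / ε) * min ε (max (u x - lam) 0)) →
      (∫ x in Ω, a x * ‖gradient (fun y => (1 / ε) * min ε (max (u y - lam) 0)) x‖) ≤
        ∫ x in Ω, a x * ‖gradient v x‖) :=
  ⟨⟨_, (lipschitzWith_doubleTruncation lam ε).comp hu⟩,
    IsLeastGradientMinimizer.comp_monotone (g := doubleTruncation lam ε) hmin ha0 hai hu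
      (monotone_doubleTruncation lam hε.le) (lipschitzWith_doubleTruncation lam ε)⟩

/-- Double truncations of minimizers of the weighted least gradient functional are
minimizers with respect to their own boundary values: if `u` minimizes `∫_Ω a‖∇·‖`
among Lipschitz functions with its boundary values on `∂Ω`, then for `λ ∈ ℝ`, `ε > 0`,
the double truncation `u_{λ,ε} = (1/ε) min(ε, max(u - λ, 0))` is Lipschitz and is
a minimizer among Lipschitz functions with its boundary values. -/
theorem double_truncations_of_minimizers_are_minimizers
    (n : ℕ) (hn : 1 ≤ n)
    (Ω : Set (EuclideanSpace ℝ (Fin n))) (hΩo : IsOpen Ω)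
    (hΩb : Bornology.IsBounded Ω)
    (a : EuclideanSpace ℝ (Fin n) → ℝ) (ha0 : ∀ x, 0 ≤ a x)
    (hai : IntegrableOn a Ω)
    (u : EuclideanSpace ℝ (Fin n) → ℝ) (K : ℝ≥0) (hu : LipschitzWith K u)
    (hmin : ∀ v : EuclideanSpace ℝ (Fin n) → ℝ, (∃ K', LipschitzWith K' v) →
      (∀ x ∈ frontier Ω, v x = u x) →
      (∫ x in Ω, a x * ‖gradient u x‖) ≤ ∫ x in Ω, a x * ‖gradient v x‖)
    (lam ε : ℝ) (hε : 0 < ε) :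
    (∃ K', LipschitzWith K' (fun y => (1 / ε) * min ε (max (u y - lam) 0))) ∧
    (∀ v : EuclideanSpace ℝ (Fin n) → ℝ, (∃ K', LipschitzWith K' v) →
      (∀ x ∈ frontier Ω, v x = (1 / ε) * min ε (max (u x - lam) 0)) →
      (∫ x in Ω, a x * ‖gradient (fun y => (1 / ε) * min ε (max (u y - lam) 0)) x‖) ≤
        ∫ x in Ω, a x * ‖gradient v x‖) :=
  double_truncations_of_minimizers_are_minimizers_general n Ω a ha0 hai u K hu hmin lam ε hε
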